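/- arXiv:2104.10103 — 2 statements merged into one kernel-verified Lean document; each statement's English description precedes it below -/
import Mathlib

section
/- Let k : [0,∞) → ℝ be convex, differentiable, and strictly decreasing with −∞ < k′(x) < 0 for all x ≥ 0. Let wᵢ > 0 be fixed positive numbers, Xᵢ ∈ ℝ^d, and define F(z) = Σᵢ wᵢ k(‖z − Xᵢ‖²). Define the iteration z_{j+1} = (Σᵢ wᵢ g(‖z_j − Xᵢ‖²) Xᵢ)/(Σᵢ wᵢ g(‖z_j − Xᵢ‖²)) with g = −k′. Then F(z_{j+1}) − F(z_j) ≥ ‖z_{j+1} − z_j‖² · Σᵢ wᵢ g(‖z_j − Xᵢ‖²) ≥ 0, so F(z_j) is nondecreasing in j. -/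
/-!
Let `c i = w i * g ‖z - X i‖²` and let `m` be the `c`-weighted mean of the `X i`. The tangent
line of the convex `k` at `‖z - X i‖²` gives
`k ‖m - X i‖² - k ‖z - X i‖² ≥ g ‖z - X i‖² * (‖z - X i‖² - ‖m - X i‖²)`,
so the gain of `F` is at least `∑ c i (‖z - X i‖² - ‖m - X i‖²)`. Writing
`z - X i = (m - X i) - (m - z)`, the cross terms `∑ c i ⟪m - z, m - X i⟫` vanish because `m` is
the weighted mean, leaving `(∑ c i) ‖m - z‖²`.
-/

open Finset

lemma ConvexOn.add_deriv_mul_sub_le {S : Set ℝ} {f : ℝ → ℝ} (hf : ConvexOn ℝ S f) {x y : ℝ}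
    (hx : x ∈ S) (hy : y ∈ S) (hfx : DifferentiableAt ℝ f x) :
    f x + deriv f x * (y - x) ≤ f y := by
  rcases lt_trichotomy x y with hxy | rfl | hxy
  · have := hf.deriv_le_slope hx hy hxy hfx
    rw [slope_def_field, le_div_iff₀ (sub_pos.2 hxy)] at this
    linarith
  · simp
  · have := hf.slope_le_deriv hy hx hxy hfx
    rw [slope_def_field, div_le_iff₀ (sub_pos.2 hxy)] at this
    linarith

section InnerProductSpace

variable {ι E : Type*} [NormedAddCommGroup E] [InnerProductSpace ℝ E]

lemma Finset.sum_smul_centerMass_sub_eq_zero (s : Finset ι) (c : ι → ℝ) (X : ι → E)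
    (hc : ∑ i ∈ s, c i ≠ 0) :
    ∑ i ∈ s, c i • (s.centerMass c X - X i) = 0 := by
  rw [sum_congr rfl fun i _ => smul_sub (c i) _ _, sum_sub_distrib, ← sum_smul, centerMass,
    smul_smul, mul_inv_cancel₀ hc, one_smul, sub_self]

lemma Finset.sum_mul_sub_norm_centerMass_sub_sq (s : Finset ι) (c : ι → ℝ) (X : ι → E) (z : E)
    (hc : ∑ i ∈ s, c i ≠ 0) :
    ∑ i ∈ s, c i * (‖z - X i‖ ^ 2 - ‖s.centerMass c X - X i‖ ^ 2) =
      (∑ i ∈ s, c i) * ‖s.centerMass c X - z‖ ^ 2 := by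
  set m := s.centerMass c X
  have hsplit : ∀ i, ‖z - X i‖ ^ 2 - ‖m - X i‖ ^ 2 =
      ‖m - z‖ ^ 2 - 2 * inner ℝ (m - z) (m - X i) := fun i => by
    rw [show z - X i = (m - X i) - (m - z) by abel, norm_sub_sq_real, real_inner_comm]
    ring
  calc ∑ i ∈ s, c i * (‖z - X i‖ ^ 2 - ‖m - X i‖ ^ 2)
      = (∑ i ∈ s, c i) * ‖m - z‖ ^ 2 - 2 * inner ℝ (m - z) (∑ i ∈ s, c i • (m - X i)) := by
        simp only [hsplit, inner_sum, real_inner_smul_right, mul_sub, sum_sub_distrib, sum_mul,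
          mul_sum]
        congr 1
        exact sum_congr rfl fun i _ => by ring
    _ = (∑ i ∈ s, c i) * ‖m - z‖ ^ 2 := by
        rw [s.sum_smul_centerMass_sub_eq_zero c X hc, inner_zero_right, mul_zero, sub_zero]

lemma ConvexOn.meanShift_ascent {k g : ℝ → ℝ} (hconv : ConvexOn ℝ (Set.Ici 0) k)
    (hdiff : ∀ x ∈ Set.Ici (0 : ℝ), DifferentiableAt ℝ k x) (hg : ∀ x, g x = -deriv k x)
    (s : Finset ι) {w : ι → ℝ} (hw : ∀ i ∈ s, 0 ≤ w i) (X : ι → E) (z : E)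
    (hS : ∑ i ∈ s, w i * g (‖z - X i‖ ^ 2) ≠ 0) :
    (∑ i ∈ s, w i * g (‖z - X i‖ ^ 2)) *
        ‖s.centerMass (fun i => w i * g (‖z - X i‖ ^ 2)) X - z‖ ^ 2 ≤
      ∑ i ∈ s, w i * k (‖s.centerMass (fun i => w i * g (‖z - X i‖ ^ 2)) X - X i‖ ^ 2) -
        ∑ i ∈ s, w i * k (‖z - X i‖ ^ 2) := by
  rw [← s.sum_mul_sub_norm_centerMass_sub_sq _ X z hS, ← sum_sub_distrib]
  refine sum_le_sum fun i hi => ?_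
  set a := ‖z - X i‖ ^ 2
  set b := ‖s.centerMass (fun i => w i * g (‖z - X i‖ ^ 2)) X - X i‖ ^ 2
  have ha : a ∈ Set.Ici 0 := Set.mem_Ici.2 (sq_nonneg _)
  have hb : b ∈ Set.Ici 0 := Set.mem_Ici.2 (sq_nonneg _)
  have htangent := hconv.add_deriv_mul_sub_le ha hb (hdiff a ha)
  rw [hg]
  linear_combination mul_le_mul_of_nonneg_left htangent (hw i hi)

end InnerProductSpace

/-- Ascent property of the regression mean shift iteration: with `g = -k'`,
`F z = ∑ i, w i * k ‖z - X i‖²`, and `z (j+1)` the `g`-weighted mean of the `X i` at `z j`,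
`F (z (j+1)) - F (z j) ≥ ‖z (j+1) - z j‖² * ∑ i, w i * g ‖z j - X i‖² ≥ 0`,
so `F ∘ z` is nondecreasing. -/
theorem stmt2 (d n : ℕ) (hn : 0 < n) (k : ℝ → ℝ)
    (hconv : ConvexOn ℝ (Set.Ici (0 : ℝ)) k)
    (hdiff : ∀ x ∈ Set.Ici (0 : ℝ), DifferentiableAt ℝ k x)
    (hk' : ∀ x ∈ Set.Ici (0 : ℝ), deriv k x < 0)
    (w : Fin n → ℝ) (hw : ∀ i, 0 < w i)
    (X : Fin n → EuclideanSpace ℝ (Fin d))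
    (g : ℝ → ℝ) (hg : ∀ x, g x = -(deriv k x))
    (F : EuclideanSpace ℝ (Fin d) → ℝ)
    (hF : ∀ z, F z = ∑ i, w i * k (‖z - X i‖ ^ 2))
    (z : ℕ → EuclideanSpace ℝ (Fin d))
    (hiter : ∀ j, z (j + 1) =
      (∑ i, w i * g (‖z j - X i‖ ^ 2))⁻¹ • ∑ i, (w i * g (‖z j - X i‖ ^ 2)) • X i) :
    (∀ j, F (z (j + 1)) - F (z j) ≥
        ‖z (j + 1) - z j‖ ^ 2 * ∑ i, w i * g (‖z j - X i‖ ^ 2) ∧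
      (0 : ℝ) ≤ ‖z (j + 1) - z j‖ ^ 2 * ∑ i, w i * g (‖z j - X i‖ ^ 2)) ∧
    Monotone (fun j => F (z j)) := by
  have hg_pos : ∀ x ∈ Set.Ici (0 : ℝ), 0 < g x := fun x hx => by linarith [hg x, hk' x hx]
  have hweight : ∀ j, 0 < ∑ i, w i * g (‖z j - X i‖ ^ 2) := fun j =>
    sum_pos (fun i _ => mul_pos (hw i) (hg_pos _ (Set.mem_Ici.2 (sq_nonneg _))))
      (univ_nonempty_iff.2 ⟨⟨0, hn⟩⟩)
  have hgain : ∀ j, ‖z (j + 1) - z j‖ ^ 2 * ∑ i, w i * g (‖z j - X i‖ ^ 2) ≤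
      F (z (j + 1)) - F (z j) := fun j => by
    rw [hF, hF, hiter j, mul_comm]
    exact hconv.meanShift_ascent hdiff hg univ (fun i _ => (hw i).le) X (z j) (hweight j).ne'
  have hgain_nonneg : ∀ j, 0 ≤ ‖z (j + 1) - z j‖ ^ 2 * ∑ i, w i * g (‖z j - X i‖ ^ 2) :=
    fun j => mul_nonneg (sq_nonneg _) (hweight j).le
  exact ⟨fun j => ⟨hgain j, hgain_nonneg j⟩,
    monotone_nat_of_le_succ fun j => by linarith [hgain j, hgain_nonneg j]⟩
end

section
/- Let p, p̃ be twice differentiable on a neighborhood of x ∈ ℝ^d with ∇p(x) = 0, and let x̃ be a point with ∇p̃(x̃) = 0 and ‖x̃ − x‖ ≤ κ. Suppose all eigenvalues of ∇²p(x) are ≤ −λ* < 0, the third derivatives of p̃ are bounded so that ∇p̃(x̃) − ∇p̃(x) = [∇²p(x) + Δ](x̃ − x) with ‖Δ‖_op ≤ λ*/2. Then ‖x̃ − x‖ ≤ (2/λ*) ‖∇p̃(x) − ∇p(x)‖. -/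
open scoped RealInnerProductSpace

theorem le_norm_apply_of_inner_apply_le_neg {E : Type*} [NormedAddCommGroup E]
    [InnerProductSpace ℝ E] {T : E → E} {c : ℝ} {v : E}
    (hT : ⟪v, T v⟫ ≤ -c * ‖v‖ ^ 2) : c * ‖v‖ ≤ ‖T v‖ := by
  rcases (norm_nonneg v).eq_or_lt with hv | hv
  · simp [← hv]
  have hcs : -⟪v, T v⟫ ≤ ‖v‖ * ‖T v‖ :=
    (neg_le_abs _).trans (abs_real_inner_le_norm v (T v))
  have : ‖v‖ * (c * ‖v‖) ≤ ‖v‖ * ‖T v‖ := by nlinarith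
  exact le_of_mul_le_mul_left this hv

theorem half_mul_norm_le_norm_add_apply {E F : Type*} [SeminormedAddCommGroup E]
    [NormedSpace ℝ E] [SeminormedAddCommGroup F] [NormedSpace ℝ F]
    {T : E → F} {Δ : E →L[ℝ] F} {c : ℝ} {v : E}
    (hT : c * ‖v‖ ≤ ‖T v‖) (hΔ : ‖Δ‖ ≤ c / 2) : c / 2 * ‖v‖ ≤ ‖T v + Δ v‖ := by
  have hΔv : ‖Δ v‖ ≤ c / 2 * ‖v‖ :=
    (Δ.le_opNorm v).trans (mul_le_mul_of_nonneg_right hΔ (norm_nonneg v))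
  have : ‖T v‖ ≤ ‖T v + Δ v‖ + ‖Δ v‖ := by
    simpa using norm_sub_le (T v + Δ v) (Δ v)
  linarith

theorem stmt13_general (d : ℕ) (p pt : EuclideanSpace ℝ (Fin d) → ℝ)
    (x xt : EuclideanSpace ℝ (Fin d)) (lams : ℝ) (hlams : 0 < lams)
    (hcritp : gradient p x = 0) (hcritpt : gradient pt xt = 0)
    (H Δ : EuclideanSpace ℝ (Fin d) →L[ℝ] EuclideanSpace ℝ (Fin d))
    (hH : ∀ v, ⟪v, H v⟫ ≤ -lams * ‖v‖ ^ 2)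
    (hΔ : ‖Δ‖ ≤ lams / 2)
    (heq : gradient pt xt - gradient pt x = H (xt - x) + Δ (xt - x)) :
    ‖xt - x‖ ≤ (2 / lams) * ‖gradient pt x - gradient p x‖ := by
  have hdiff : gradient pt x - gradient p x = -(H (xt - x) + Δ (xt - x)) := by
    rw [← heq, hcritp, hcritpt]
    abel
  have hbound : lams / 2 * ‖xt - x‖ ≤ ‖gradient pt x - gradient p x‖ := by
    rw [hdiff, norm_neg]
    exact half_mul_norm_le_norm_add_apply (le_norm_apply_of_inner_apply_le_neg (hH _)) hΔ
  rw [div_mul_eq_mul_div, le_div_iff₀ hlams]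
  linarith

/-- Displacement bound for a perturbed mode: if `∇p(x) = 0`, `∇p̃(x̃) = 0`, `‖x̃ - x‖ ≤ κ`,
the Hessian `H = ∇²p(x)` satisfies `⟪v, H v⟫ ≤ -λ*‖v‖²` (all eigenvalues `≤ -λ* < 0`),
and `∇p̃(x̃) - ∇p̃(x) = (H + Δ)(x̃ - x)` with `‖Δ‖ ≤ λ*/2`, then
`‖x̃ - x‖ ≤ (2/λ*) ‖∇p̃(x) - ∇p(x)‖`. -/
theorem stmt13 (d : ℕ) (p pt : EuclideanSpace ℝ (Fin d) → ℝ)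
    (x xt : EuclideanSpace ℝ (Fin d)) (κ lams : ℝ) (hlams : 0 < lams)
    (hκ : ‖xt - x‖ ≤ κ)
    (hcritp : gradient p x = 0) (hcritpt : gradient pt xt = 0)
    (H Δ : EuclideanSpace ℝ (Fin d) →L[ℝ] EuclideanSpace ℝ (Fin d))
    (hH : ∀ v, ⟪v, H v⟫ ≤ -lams * ‖v‖ ^ 2)
    (hΔ : ‖Δ‖ ≤ lams / 2)
    (heq : gradient pt xt - gradient pt x = H (xt - x) + Δ (xt - x)) :
    ‖xt - x‖ ≤ (2 / lams) * ‖gradient pt x - gradient p x‖ :=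
  stmt13_general d p pt x xt lams hlams hcritp hcritpt H Δ hH hΔ heq
end
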